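/- arXiv:q-alg/9606007 — 2 statements merged into one kernel-verified Lean document; each statement's English description precedes it below -/
import Mathlib

section
/- Let (A, Z, {·,·}) be a Poisson fibred algebra and θ : Z → A a κ-linear map. Define the gauged bracket {f, b}_θ := {f, b} + [θ(f), b] for f ∈ Z, b ∈ A (note that {f,g}_θ = {f,g} for f,g ∈ Z since g is central), and the gauged curvature Φ_θ(f,g)(a) := {{f,g}_θ, a}_θ − {f, {g,a}_θ}_θ + {g, {f,a}_θ}_θ. Then for all f, g ∈ Z and a ∈ A: Φ_θ(f,g)(a) = Φ(f,g)(a) + [θ({f,g}), a] − [{f, θ(g)}, a] + [{g, θ(f)}, a] − [[θ(f), θ(g)], a]. -/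
/-- The gauged bracket `{f, b}_θ := {f, b} + [θ(f), b]` of a Poisson fibred algebra
bracket `br` and a linear map `θ : Z → A`. -/
def gaugedBracket {κ : Type*} [Field κ] {A : Type*} [Ring A] [Algebra κ A]
    (br : Subalgebra.center κ A →ₗ[κ] A →ₗ[κ] A)
    (θ : Subalgebra.center κ A →ₗ[κ] A)
    (f : Subalgebra.center κ A) (b : A) : A :=
  br f b + (θ f * b - b * θ f)

/-- Let `(A, Z, {·,·})` be a Poisson fibred algebra and `θ : Z → A` a
κ-linear map.  With the gauged bracket `{f, b}_θ := {f, b} + [θ(f), b]` (which agrees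
with `{·,·}` on `Z × Z` since `Z` is central) and the gauged curvature
`Φ_θ(f,g)(a) := {{f,g}_θ, a}_θ − {f, {g,a}_θ}_θ + {g, {f,a}_θ}_θ`, one has
`Φ_θ(f,g)(a) = Φ(f,g)(a) + [θ({f,g}), a] − [{f, θ(g)}, a] + [{g, θ(f)}, a]
  − [[θ(f), θ(g)], a]`. -/
theorem poisson_fibred_gauged_curvature
    (κ : Type*) [Field κ] [CharZero κ]
    (A : Type*) [Ring A] [Algebra κ A]
    (br : Subalgebra.center κ A →ₗ[κ] A →ₗ[κ] A)
    (hZ : ∀ f g : Subalgebra.center κ A, br f (g : A) ∈ Subalgebra.center κ A)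
    (hanti : ∀ f g : Subalgebra.center κ A, br f (g : A) = - br g (f : A))
    (hjac : ∀ f g h : Subalgebra.center κ A,
      br ⟨br f (g : A), hZ f g⟩ (h : A) + br ⟨br g (h : A), hZ g h⟩ (f : A)
        + br ⟨br h (f : A), hZ h f⟩ (g : A) = 0)
    (hleib : ∀ (f : Subalgebra.center κ A) (a b : A),
      br f (a * b) = br f a * b + a * br f b)
    (hmul : ∀ (f g : Subalgebra.center κ A) (a : A),
      br (f * g) a = (f : A) * br g a + (g : A) * br f a)
    (θ : Subalgebra.center κ A →ₗ[κ] A) :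
    ∀ (f g : Subalgebra.center κ A) (a : A),
      gaugedBracket br θ ⟨br f (g : A), hZ f g⟩ a
          - gaugedBracket br θ f (gaugedBracket br θ g a)
          + gaugedBracket br θ g (gaugedBracket br θ f a)
        = (br ⟨br f (g : A), hZ f g⟩ a - br f (br g a) + br g (br f a))
          + (θ ⟨br f (g : A), hZ f g⟩ * a - a * θ ⟨br f (g : A), hZ f g⟩)
          - (br f (θ g) * a - a * br f (θ g))
          + (br g (θ f) * a - a * br g (θ f))
          - ((θ f * θ g - θ g * θ f) * a - a * (θ f * θ g - θ g * θ f)) := by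
  intro f g a
  simp only [gaugedBracket, map_add, map_sub, hleib]
  noncomm_ring
end

section
/- Let A be a commutative unital κ-algebra, M an A-module, and let (B_i, L_i, R_i)_{i≥0} be a formal bimodule deformation of the pair (A, M). Define {f,g} := B_1(f,g) − B_1(g,f) on A and {f,m}' := L_1(f,m) − R_1(m,f) for f ∈ A, m ∈ M. Then: (1) {·,·} makes A a Poisson algebra (it is antisymmetric, satisfies the Jacobi identity, and {f, gh} = {f,g}h + g{f,h}); and (2) {·,·}' makes M a Poisson module over A, i.e., for all f, g ∈ A and m ∈ M: {{f,g}, m}' = {f, {g,m}'}' − {g, {f,m}'}', {f, g m}' = g {f,m}' + {f,g} m, and {fg, m}' = f {g,m}' + g {f,m}'. -/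
/-- Let `A` be a commutative unital κ-algebra, `M` an `A`-module, and
`(B_i, L_i, R_i)` a formal bimodule deformation of the pair `(A, M)`.  With
`{f,g} := B₁(f,g) − B₁(g,f)` on `A` and `{f,m}' := L₁(f,m) − R₁(m,f)`, the bracket
`{·,·}` makes `A` a Poisson algebra and `{·,·}'` makes `M` a Poisson module over `A`. -/
theorem bimodule_deformation_gives_poisson_module
    (κ : Type*) [Field κ] [CharZero κ]
    (A : Type*) [CommRing A] [Algebra κ A]
    (M : Type*) [AddCommGroup M] [Module κ M] [Module A M] [IsScalarTower κ A M]
    (B : ℕ → A →ₗ[κ] A →ₗ[κ] A)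
    (L : ℕ → A →ₗ[κ] M →ₗ[κ] M)
    (R : ℕ → M →ₗ[κ] A →ₗ[κ] M)
    (hB0 : ∀ a b : A, B 0 a b = a * b)
    (hL0 : ∀ (f : A) (m : M), L 0 f m = f • m)
    (hR0 : ∀ (m : M) (f : A), R 0 m f = f • m)
    (hassoc : ∀ (n : ℕ) (a b c : A),
      ∑ i ∈ Finset.range (n + 1), B i (B (n - i) a b) c
        = ∑ i ∈ Finset.range (n + 1), B i a (B (n - i) b c))
    (hleft : ∀ (n : ℕ) (f g : A) (m : M),
      ∑ i ∈ Finset.range (n + 1), L i (B (n - i) f g) m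
        = ∑ i ∈ Finset.range (n + 1), L i f (L (n - i) g m))
    (hright : ∀ (n : ℕ) (m : M) (f g : A),
      ∑ i ∈ Finset.range (n + 1), R i (R (n - i) m f) g
        = ∑ i ∈ Finset.range (n + 1), R i m (B (n - i) f g))
    (hbimod : ∀ (n : ℕ) (f : A) (m : M) (g : A),
      ∑ i ∈ Finset.range (n + 1), R i (L (n - i) f m) g
        = ∑ i ∈ Finset.range (n + 1), L i f (R (n - i) m g)) :
    -- (1) `{f,g} := B₁(f,g) − B₁(g,f)` makes `A` a Poisson algebra
    ((∀ f g : A, B 1 f g - B 1 g f = -(B 1 g f - B 1 f g)) ∧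
     (∀ f g h : A,
       (B 1 (B 1 f g - B 1 g f) h - B 1 h (B 1 f g - B 1 g f))
         + (B 1 (B 1 g h - B 1 h g) f - B 1 f (B 1 g h - B 1 h g))
         + (B 1 (B 1 h f - B 1 f h) g - B 1 g (B 1 h f - B 1 f h)) = 0) ∧
     (∀ f g h : A,
       B 1 f (g * h) - B 1 (g * h) f
         = (B 1 f g - B 1 g f) * h + g * (B 1 f h - B 1 h f))) ∧
    -- (2) `{f,m}' := L₁(f,m) − R₁(m,f)` makes `M` a Poisson module over `A`
    ((∀ (f g : A) (m : M),
       L 1 (B 1 f g - B 1 g f) m - R 1 m (B 1 f g - B 1 g f)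
         = (L 1 f (L 1 g m - R 1 m g) - R 1 (L 1 g m - R 1 m g) f)
           - (L 1 g (L 1 f m - R 1 m f) - R 1 (L 1 f m - R 1 m f) g)) ∧
     (∀ (f g : A) (m : M),
       L 1 f (g • m) - R 1 (g • m) f
         = g • (L 1 f m - R 1 m f) + (B 1 f g - B 1 g f) • m) ∧
     (∀ (f g : A) (m : M),
       L 1 (f * g) m - R 1 m (f * g)
         = f • (L 1 g m - R 1 m g) + g • (L 1 f m - R 1 m f))) := by
  -- extract the coefficientwise identities at orders n = 1 and n = 2
  have hA1 : ∀ a b c : A, B 1 a b * c + B 1 (a * b) c = a * B 1 b c + B 1 a (b * c) := by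
    intro a b c
    have h := hassoc 1 a b c
    simpa [Finset.sum_range_succ, hB0] using h
  have hA2 : ∀ a b c : A,
      B 2 a b * c + B 1 (B 1 a b) c + B 2 (a * b) c
        = a * B 2 b c + B 1 a (B 1 b c) + B 2 a (b * c) := by
    intro a b c
    have h := hassoc 2 a b c
    simpa [Finset.sum_range_succ, hB0, add_assoc] using h
  have hL1 : ∀ (f g : A) (m : M),
      B 1 f g • m + L 1 (f * g) m = f • L 1 g m + L 1 f (g • m) := by
    intro f g m
    have h := hleft 1 f g m
    simpa [Finset.sum_range_succ, hB0, hL0] using h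
  have hR1 : ∀ (m : M) (f g : A),
      g • R 1 m f + R 1 (f • m) g = B 1 f g • m + R 1 m (f * g) := by
    intro m f g
    have h := hright 1 m f g
    simpa [Finset.sum_range_succ, hB0, hR0] using h
  have hM1 : ∀ (f : A) (m : M) (g : A),
      g • L 1 f m + R 1 (f • m) g = f • R 1 m g + L 1 f (g • m) := by
    intro f m g
    have h := hbimod 1 f m g
    simpa [Finset.sum_range_succ, hL0, hR0] using h
  have hL2 : ∀ (f g : A) (m : M),
      B 2 f g • m + L 1 (B 1 f g) m + L 2 (f * g) m
        = f • L 2 g m + L 1 f (L 1 g m) + L 2 f (g • m) := by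
    intro f g m
    have h := hleft 2 f g m
    simpa [Finset.sum_range_succ, hB0, hL0, add_assoc] using h
  have hR2 : ∀ (m : M) (f g : A),
      g • R 2 m f + R 1 (R 1 m f) g + R 2 (f • m) g
        = B 2 f g • m + R 1 m (B 1 f g) + R 2 m (f * g) := by
    intro m f g
    have h := hright 2 m f g
    simpa [Finset.sum_range_succ, hB0, hR0, add_assoc] using h
  have hM2 : ∀ (f : A) (m : M) (g : A),
      g • L 2 f m + R 1 (L 1 f m) g + R 2 (f • m) g
        = f • R 2 m g + L 1 f (R 1 m g) + L 2 f (g • m) := by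
    intro f m g
    have h := hbimod 2 f m g
    simpa [Finset.sum_range_succ, hL0, hR0, add_assoc] using h
  refine ⟨⟨?_, ?_, ?_⟩, ?_, ?_, ?_⟩
  · intro f g; ring
  · intro f g h
    have e1 : B 2 f (g * h) = B 2 f (h * g) := by rw [mul_comm]
    have e2 : B 2 g (h * f) = B 2 g (f * h) := by rw [mul_comm]
    have e3 : B 2 h (f * g) = B 2 h (g * f) := by rw [mul_comm]
    have e4 : B 2 (g * f) h = B 2 (f * g) h := by rw [mul_comm]
    have e5 : B 2 (h * g) f = B 2 (g * h) f := by rw [mul_comm]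
    have e6 : B 2 (f * h) g = B 2 (h * f) g := by rw [mul_comm]
    simp only [map_sub, LinearMap.sub_apply]
    linear_combination hA2 f g h + hA2 g h f + hA2 h f g
      - hA2 g f h - hA2 h g f - hA2 f h g + e1 + e2 + e3 + e4 + e5 + e6
  · intro f g h
    have ccA : B 1 g (h * f) = B 1 g (f * h) := by rw [mul_comm]
    have ccB : B 1 (g * f) h = B 1 (f * g) h := by rw [mul_comm]
    linear_combination - hA1 f g h - hA1 g h f + hA1 g f h - ccA - ccB
  · intro f g m
    have hcl : L 2 (f * g) m = L 2 (g * f) m := by rw [mul_comm]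
    have hcr : R 2 m (f * g) = R 2 m (g * f) := by rw [mul_comm]
    simp only [map_sub, LinearMap.sub_apply]
    linear_combination (norm := module) hL2 f g m - hL2 g f m + hR2 m f g - hR2 m g f
      - hM2 f m g + hM2 g m f - hcl + hcr
  · intro f g m
    have hcr : R 1 m (f * g) = R 1 m (g * f) := by rw [mul_comm]
    linear_combination (norm := module) hR1 m f g - hR1 m g f - hM1 f m g + hcr
  · intro f g m
    linear_combination (norm := module) hL1 f g m + hR1 m f g - hM1 f m g
end
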